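/- arXiv:1710.04733 — 4 statements merged into one kernel-verified Lean document; each statement's English description precedes it below -/
import Mathlib

section
/- In the poset Φₙ, any maximal chain x₀ < x₁ < ⋯ (where each element covers the previous, starting from a minimal element and ending at a maximal element) has length exactly n, with x₀ = (0,…,0) and xₙ = (1,…,1), and xᵢ has rank i for each 0 ≤ i ≤ n. -/
/-- A sequence of integers is *alternating* when each entry lies in `{-1,0,1}` and
the nonzero entries, read in order, form the pattern `1, -1, 1, …, -1, 1`
(alternating in sign, starting and ending with `1`). -/
def IsAlternating (n : ℕ) (α : Fin n → ℤ) : Prop :=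
  (∀ i, α i = -1 ∨ α i = 0 ∨ α i = 1) ∧
  (∃ i, α i ≠ 0) ∧
  (∀ i, α i ≠ 0 → (∀ j, j < i → α j = 0) → α i = 1) ∧
  (∀ i, α i ≠ 0 → (∀ j, i < j → α j = 0) → α i = 1) ∧
  (∀ i j, i < j → α i ≠ 0 → α j ≠ 0 → (∀ k, i < k → k < j → α k = 0) → α j = -α i)

/-- Vertices of the poset Φₙ: elements of {0,1}ⁿ. -/
def Vertex (n : ℕ) := {x : Fin n → ℤ // ∀ i, x i = 0 ∨ x i = 1}

/-- In Φₙ, y covers x when y - x is an alternating sequence. -/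
def Covers (n : ℕ) (x y : Vertex n) : Prop :=
  IsAlternating n (fun i => y.1 i - x.1 i)

/-- The rank of a vertex: its number of nonzero coordinates. -/
def rank {n : ℕ} (x : Vertex n) : ℕ := (Finset.univ.filter fun i => x.1 i = 1).card

lemma alt_sum_aux {n : ℕ} : ∀ N (α : Fin n → ℤ),
    (Finset.univ.filter fun i => α i ≠ 0).card ≤ N → IsAlternating n α →
    ∑ i, α i = 1 := by
  intro N
  induction N with
  | zero =>
    intro α hcard h
    obtain ⟨i, hi⟩ := h.2.1
    have hmem : i ∈ Finset.univ.filter fun i => α i ≠ 0 := by simp [hi]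
    have := Finset.card_eq_zero.mp (Nat.le_zero.mp hcard)
    rw [this] at hmem
    exact absurd hmem (Finset.notMem_empty i)
  | succ N ih =>
    intro α hcard h
    obtain ⟨hrange, ⟨i0ex, hi0ex⟩, hfirst, hlast, halt⟩ := h
    set s := Finset.univ.filter fun i => α i ≠ 0 with hs
    have hsne : s.Nonempty := ⟨i0ex, by simp [hs, hi0ex]⟩
    set i := s.max' hsne with hidef
    have hiS : α i ≠ 0 := (Finset.mem_filter.mp (s.max'_mem hsne)).2
    have hig : ∀ k, i < k → α k = 0 := by
      intro k hk
      by_contra hne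
      have hm : k ∈ s := by simp [hs, hne]
      exact absurd (s.le_max' k hm) (not_le.mpr hk)
    have hαi : α i = 1 := hlast i hiS hig
    by_cases hone : ∀ k, α k ≠ 0 → k = i
    · rw [Finset.sum_eq_single i (fun b _ hb => by_contra fun h' => hb (hone b h')) (by simp)]
      exact hαi
    · push_neg at hone
      obtain ⟨k0, hk0, hk0i⟩ := hone
      have htne : (s.erase i).Nonempty := ⟨k0, Finset.mem_erase.mpr ⟨hk0i, by simp [hs, hk0]⟩⟩
      set j := (s.erase i).max' htne with hjdef
      have hjmem := (s.erase i).max'_mem htne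
      have hjne : j ≠ i := (Finset.mem_erase.mp hjmem).1
      have hjS : α j ≠ 0 := (Finset.mem_filter.mp (Finset.mem_erase.mp hjmem).2).2
      have hji : j < i := lt_of_le_of_ne (s.le_max' j (Finset.mem_erase.mp hjmem).2) hjne
      have hgap : ∀ k, j < k → k < i → α k = 0 := by
        intro k hjk hki
        by_contra hne
        have hmem : k ∈ s.erase i := Finset.mem_erase.mpr ⟨ne_of_lt hki, by simp [hs, hne]⟩
        exact absurd ((s.erase i).le_max' k hmem) (not_le.mpr hjk)
      have hαj : α j = -1 := by
        have h5 := halt j i hji hjS hiS hgap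
        omega
      -- first nonzero index
      set i0 := s.min' hsne with hi0def
      have hi0S : α i0 ≠ 0 := (Finset.mem_filter.mp (s.min'_mem hsne)).2
      have hi0lt : ∀ k, k < i0 → α k = 0 := by
        intro k hk
        by_contra hne
        have hm : k ∈ s := by simp [hs, hne]
        exact absurd (s.min'_le k hm) (not_le.mpr hk)
      have hαi0 : α i0 = 1 := hfirst i0 hi0S hi0lt
      have hi0j : i0 < j := by
        refine lt_of_le_of_ne (s.min'_le j (Finset.mem_erase.mp hjmem).2) ?_
        intro he; rw [he] at hαi0; omega
      set α' : Fin n → ℤ := fun k => if k < j then α k else 0 with hα'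
      have hsub : (Finset.univ.filter fun k => α' k ≠ 0) ⊂ s := by
        constructor
        · intro k hk
          simp only [hα', Finset.mem_filter] at hk
          by_cases hkj : k < j
          · simp only [hkj, if_pos] at hk
            simp [hs, hk.2]
          · simp [hkj] at hk
        · intro hsup
          have : j ∈ Finset.univ.filter fun k => α' k ≠ 0 := hsup (by simp [hs, hjS])
          simp [hα'] at this
      have hcard' : (Finset.univ.filter fun k => α' k ≠ 0).card ≤ N := by
        have := Finset.card_lt_card hsub
        omega
      have halt' : IsAlternating n α' := by
        refine ⟨?_, ⟨i0, ?_⟩, ?_, ?_, ?_⟩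
        · intro k
          by_cases hkj : k < j
          · simpa [hα', hkj] using hrange k
          · simp [hα', hkj]
        · simpa [hα', hi0j] using hi0S
        · intro k hk hpre
          by_cases hkj : k < j
          · simp only [hα', hkj, if_pos] at hk ⊢
            refine hfirst k hk ?_
            intro l hl
            have := hpre l hl
            simpa [hα', lt_trans hl hkj] using this
          · simp [hα', hkj] at hk
        · intro k hk hpost
          by_cases hkj : k < j
          · simp only [hα', hkj, if_pos] at hk ⊢
            have hgap2 : ∀ l, k < l → l < j → α l = 0 := by
              intro l hkl hlj
              have := hpost l hkl
              simpa [hα', hlj] using this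
            have h5 := halt k j hkj hk hjS hgap2
            omega
          · simp [hα', hkj] at hk
        · intro a b hab ha hb hgapab
          by_cases haj : a < j
          · by_cases hbj : b < j
            · simp only [hα', haj, hbj, if_pos] at ha hb ⊢
              refine halt a b hab ha hb ?_
              intro k hak hkb
              have := hgapab k hak hkb
              simpa [hα', lt_trans hkb hbj] using this
            · simp [hα', hbj] at hb
          · simp [hα', haj] at ha
      have hsum' : ∑ k, α' k = 1 := ih α' hcard' halt'
      have hdiff : ∑ k, (α k - α' k) = 0 := by
        have hvanish : ∀ k ∈ Finset.univ, k ∉ ({j, i} : Finset (Fin n)) → α k - α' k = 0 := by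
          intro k _ hk
          simp only [Finset.mem_insert, Finset.mem_singleton, not_or] at hk
          by_cases hkj : k < j
          · simp [hα', hkj]
          · have hjk : j < k := lt_of_le_of_ne (not_lt.mp hkj) (Ne.symm hk.1)
            rcases lt_trichotomy k i with h1 | h1 | h1
            · simp [hα', hkj, hgap k hjk h1]
            · exact absurd h1 hk.2
            · simp [hα', hkj, hig k h1]
        rw [← Finset.sum_subset (Finset.subset_univ {j, i}) hvanish]
        rw [Finset.sum_pair hjne]
        have hij : ¬ i < j := not_lt.mpr hji.le
        simp [hα', hij, hαi, hαj, lt_irrefl]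
      rw [Finset.sum_sub_distrib, hsum'] at hdiff
      omega



lemma rank_eq_sum {n : ℕ} (x : Vertex n) : ∑ i, x.1 i = (rank x : ℤ) := by
  rw [rank, ← Finset.sum_boole]
  refine Finset.sum_congr rfl fun i _ => ?_
  rcases x.2 i with h | h <;> simp [h]

lemma rank_covers {n : ℕ} {x y : Vertex n} (h : Covers n x y) : rank y = rank x + 1 := by
  have hsum := alt_sum_aux _ _ le_rfl h
  rw [Finset.sum_sub_distrib, rank_eq_sum, rank_eq_sum] at hsum
  omega

lemma single_alt {n : ℕ} (j : Fin n) : IsAlternating n (fun i => if i = j then 1 else 0) := by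
  refine ⟨fun i => by by_cases h : i = j <;> simp [h], ⟨j, by simp⟩, ?_, ?_, ?_⟩
  · intro i hi _
    by_cases h : i = j <;> simp [h] at hi ⊢
  · intro i hi _
    by_cases h : i = j <;> simp [h] at hi ⊢
  · intro a b hab ha hb _
    by_cases h : a = j
    · by_cases h' : b = j
      · subst h; subst h'; exact absurd hab (lt_irrefl _)
      · simp [h'] at hb
    · simp [h] at ha

lemma exists_covered {n : ℕ} (x : Vertex n) (j : Fin n) (hj : x.1 j = 1) :
    ∃ y : Vertex n, Covers n y x := by
  refine ⟨⟨Function.update x.1 j 0, fun i => ?_⟩, ?_⟩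
  · by_cases h : i = j
    · subst h; simp
    · rw [Function.update_of_ne h]; exact x.2 i
  · show IsAlternating n _
    have he : (fun i => x.1 i - Function.update x.1 j 0 i) = fun i => if i = j then 1 else 0 := by
      funext i
      by_cases h : i = j
      · subst h; simp [hj]
      · simp [Function.update_of_ne h, h]
    rw [he]; exact single_alt j

lemma exists_covering {n : ℕ} (x : Vertex n) (j : Fin n) (hj : x.1 j = 0) :
    ∃ y : Vertex n, Covers n x y := by
  refine ⟨⟨Function.update x.1 j 1, fun i => ?_⟩, ?_⟩
  · by_cases h : i = j
    · subst h; simp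
    · rw [Function.update_of_ne h]; exact x.2 i
  · show IsAlternating n _
    have he : (fun i => Function.update x.1 j 1 i - x.1 i) = fun i => if i = j then 1 else 0 := by
      funext i
      by_cases h : i = j
      · subst h; simp [hj]
      · simp [Function.update_of_ne h, h]
    rw [he]; exact single_alt j

/-- Any maximal chain of Φₙ (each element covers the previous; the chain starts at a
minimal element and ends at a maximal element of the order generated by the covering
relation) has length exactly n, starts at (0,…,0), ends at (1,…,1), and its i-th
element has rank i. -/
theorem maximal_chain_length (n m : ℕ) (x : Fin (m+1) → Vertex n)
    (hcov : ∀ i : Fin m, Covers n (x i.castSucc) (x i.succ))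
    (hmin : ∀ y : Vertex n, ¬ Relation.TransGen (Covers n) y (x 0))
    (hmax : ∀ y : Vertex n, ¬ Relation.TransGen (Covers n) (x (Fin.last m)) y) :
    m = n ∧ (∀ j, (x 0).1 j = 0) ∧ (∀ j, (x (Fin.last m)).1 j = 1) ∧
      (∀ i : Fin (m+1), rank (x i) = i) := by
  have h0 : ∀ j, (x 0).1 j = 0 := by
    intro j
    rcases (x 0).2 j with h | h
    · exact h
    · obtain ⟨y, hy⟩ := exists_covered (x 0) j h
      exact absurd (Relation.TransGen.single hy) (hmin y)
  have hL : ∀ j, (x (Fin.last m)).1 j = 1 := by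
    intro j
    rcases (x (Fin.last m)).2 j with h | h
    · obtain ⟨y, hy⟩ := exists_covering (x (Fin.last m)) j h
      exact absurd (Relation.TransGen.single hy) (hmax y)
    · exact h
  have hr0 : rank (x 0) = 0 := by
    rw [rank, Finset.card_eq_zero, Finset.filter_eq_empty_iff]
    intro i _
    rw [h0 i]; norm_num
  have hrank : ∀ k : ℕ, (hk : k ≤ m) → rank (x ⟨k, Nat.lt_succ_of_le hk⟩) = k := by
    intro k
    induction k with
    | zero => intro _; exact hr0
    | succ k ihk =>
      intro hk
      have hkm : k < m := hk
      have hc := rank_covers (hcov ⟨k, hkm⟩)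
      have e1 : (⟨k, hkm⟩ : Fin m).castSucc = (⟨k, Nat.lt_succ_of_le hkm.le⟩ : Fin (m+1)) := rfl
      have e2 : (⟨k, hkm⟩ : Fin m).succ = (⟨k+1, Nat.lt_succ_of_le hk⟩ : Fin (m+1)) := rfl
      rw [e1, e2] at hc
      rw [hc, ihk hkm.le]
  have hrl : rank (x (Fin.last m)) = m := by
    have := hrank m le_rfl
    exact this
  have hrn : rank (x (Fin.last m)) = n := by
    rw [rank]
    have he : (Finset.univ.filter fun i => (x (Fin.last m)).1 i = 1) = Finset.univ := by
      rw [Finset.filter_eq_self]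
      intro i _; exact hL i
    rw [he, Finset.card_univ, Fintype.card_fin]
  refine ⟨by omega, h0, hL, ?_⟩
  intro i
  have h := hrank i.val (Nat.lt_succ_iff.mp i.isLt)
  have : (⟨i.val, Nat.lt_succ_of_le (Nat.lt_succ_iff.mp i.isLt)⟩ : Fin (m+1)) = i := Fin.eta i _
  rwa [this] at h
end

section
/- Given a maximal chain x₀ < x₁ < ⋯ < xₙ in Φₙ (so xᵢ covers xᵢ₋₁ for each i, x₀ = 0, xₙ = 1), the n × n matrix A whose i-th row is xᵢ − xᵢ₋₁ is an alternating sign matrix. -/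
/-- An *alternating sign matrix*: every row and column is alternating. -/
def IsASM (n : ℕ) (A : Matrix (Fin n) (Fin n) ℤ) : Prop :=
  (∀ i, IsAlternating n (fun j => A i j)) ∧ (∀ j, IsAlternating n (fun i => A i j))

/-- If all consecutive differences between `a` and `b` vanish, `f` is constant there. -/
lemma const_of_diff_zero {n : ℕ} (f : Fin (n+1) → ℤ) :
    ∀ (b a : Fin (n+1)), a ≤ b →
      (∀ k : Fin n, a ≤ k.castSucc → k.succ ≤ b → f k.succ - f k.castSucc = 0) →
      f b = f a := by
  intro b
  induction b using Fin.induction with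
  | zero =>
    intro a hab _
    have : a = 0 := le_antisymm hab (Fin.zero_le a)
    rw [this]
  | succ k ih =>
    intro a hab h
    by_cases hk : a ≤ k.castSucc
    · have h0 := h k hk le_rfl
      have hfk : f k.succ = f k.castSucc := by linarith
      rw [hfk]
      refine ih a hk ?_
      intro k' h1' h2'
      exact h k' h1' (le_trans h2' (Fin.castSucc_le_succ k))
    · have hlt : k.castSucc < a := lt_of_not_ge hk
      have : k.succ ≤ a := by
        rw [Fin.le_def]; rw [Fin.lt_def] at hlt
        simp only [Fin.val_succ, Fin.coe_castSucc] at *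
        omega
      have : a = k.succ := le_antisymm hab this
      rw [this]

/-- For a maximal chain x₀ < x₁ < ⋯ < xₙ of Φₙ, the matrix whose i-th row is
xᵢ - xᵢ₋₁ is an alternating sign matrix. -/
theorem chain_to_asm (n : ℕ) (x : Fin (n+1) → Vertex n)
    (hcov : ∀ i : Fin n, Covers n (x i.castSucc) (x i.succ))
    (h0 : ∀ j, (x 0).1 j = 0) (h1 : ∀ j, (x (Fin.last n)).1 j = 1) :
    IsASM n (fun i j => (x i.succ).1 j - (x i.castSucc).1 j) := by
  constructor
  · intro i; exact hcov i
  · intro j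
    set f : Fin (n+1) → ℤ := fun i => (x i).1 j with hf
    have hmem : ∀ i, f i = 0 ∨ f i = 1 := fun i => (x i).2 j
    have hconst : ∀ (a b : Fin (n+1)), a ≤ b →
        (∀ k : Fin n, a ≤ k.castSucc → k.succ ≤ b → f k.succ - f k.castSucc = 0) →
        f b = f a := fun a b hab h => const_of_diff_zero f b a hab h
    have hsl : ∀ (k i : Fin n), k.succ ≤ i.castSucc ↔ k < i := by
      intro k i
      rw [Fin.le_def, Fin.lt_def]
      simp [Fin.val_succ]
    have hcs : ∀ (k i : Fin n), i.succ ≤ k.castSucc ↔ i < k := by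
      intro k i
      rw [Fin.le_def, Fin.lt_def]
      simp [Fin.val_succ]
    refine ⟨?_, ?_, ?_, ?_, ?_⟩
    · intro i
      rcases hmem i.succ with h | h <;> rcases hmem i.castSucc with h' | h' <;>
        simp only [hf] at h h' <;> simp only [h, h'] <;> omega
    · -- exists nonzero
      by_contra hall
      push_neg at hall
      have hc : f (Fin.last n) = f 0 :=
        hconst 0 (Fin.last n) (Fin.zero_le _) (fun k _ _ => by
          have := hall k; simpa using this)
      have := h0 j
      have := h1 j
      simp only [hf] at hc
      omega
    · -- first nonzero is 1
      intro i hne hbefore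
      have hfi : f i.castSucc = f 0 := by
        refine hconst 0 i.castSucc (Fin.zero_le _) ?_
        intro k _ hk2
        have : k < i := (hsl k i).1 hk2
        have := hbefore k this
        simpa using this
      have h00 : f 0 = 0 := h0 j
      beta_reduce at hne ⊢
      rcases hmem i.succ with h | h <;> simp only [hf] at h hfi h00 <;> omega
    · intro i hne hafter
      have hfi : f i.succ = f (Fin.last n) := by
        refine (hconst i.succ (Fin.last n) (Fin.le_last _) ?_).symm
        intro k hk1 _
        have : i < k := (hcs k i).1 hk1
        have := hafter k this
        simpa using this
      have h11 : f (Fin.last n) = 1 := h1 j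
      beta_reduce at hne ⊢
      rcases hmem i.castSucc with h | h <;> simp only [hf] at h hfi h11 <;> omega
    · intro i j' hij hne1 hne2 hmid
      have hfi : f j'.castSucc = f i.succ := by
        refine hconst i.succ j'.castSucc ?_ ?_
        · rw [Fin.le_def]; rw [Fin.lt_def] at hij
          simp [Fin.val_succ]; omega
        · intro k hk1 hk2
          have h1' : i < k := (hcs k i).1 hk1
          have h2' : k < j' := (hsl k j').1 hk2
          have := hmid k h1' h2'
          simpa using this
      simp only [hf] at hfi
      beta_reduce at hne1 hne2 ⊢
      rcases hmem i.castSucc with h | h <;> rcases hmem i.succ with h' | h' <;>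
        rcases hmem j'.castSucc with h'' | h'' <;> rcases hmem j'.succ with h''' | h''' <;>
        simp only [hf] at h h' h'' h''' <;> omega
end

section
/- Given an n × n alternating sign matrix A, define xᵢ (for 0 ≤ i ≤ n) to be the sum of rows 1 through i of A. Then each xᵢ lies in {0,1}ⁿ, x₀ = (0,…,0), xₙ = (1,…,1), and xᵢ covers xᵢ₋₁ in Φₙ for each 1 ≤ i ≤ n; hence x₀ < x₁ < ⋯ < xₙ is a maximal chain in Φₙ. -/
def PS (n : ℕ) (α : Fin n → ℤ) (m : ℕ) : ℤ :=
  ∑ k : Fin n, if (k : ℕ) < m then α k else 0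

lemma PS_zero (n : ℕ) (α : Fin n → ℤ) : PS n α 0 = 0 := by simp [PS]

lemma PS_succ {n m : ℕ} (α : Fin n → ℤ) (h : m < n) :
    PS n α (m+1) = PS n α m + α ⟨m, h⟩ := by
  have e : ∀ k : Fin n, (if (k:ℕ) < m+1 then α k else 0)
      = (if (k:ℕ) < m then α k else 0) + (if k = ⟨m,h⟩ then α k else 0) := by
    intro k
    by_cases h1 : (k:ℕ) < m
    · have : k ≠ ⟨m,h⟩ := by simp [Fin.ext_iff]; omega
      simp [h1, Nat.lt_succ_of_lt h1, this]
    · by_cases h2 : (k:ℕ) = m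
      · have : k = ⟨m,h⟩ := by simp [Fin.ext_iff, h2]
        simp [this, h1]
      · have h3 : k ≠ ⟨m,h⟩ := by simp [Fin.ext_iff]; omega
        have h4 : ¬ (k:ℕ) < m+1 := by omega
        simp [h1, h3, h4]
  rw [show PS n α (m+1) = ∑ k : Fin n, ((if (k:ℕ) < m then α k else 0) + (if k = ⟨m,h⟩ then α k else 0)) from Finset.sum_congr rfl (fun k _ => e k)]
  rw [Finset.sum_add_distrib, Finset.sum_ite_eq' Finset.univ ⟨m,h⟩ α]
  simp [PS]

lemma key {n : ℕ} {α : Fin n → ℤ} (hα : IsAlternating n α) :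
    ∀ m, m ≤ n →
      ((PS n α m = 0 ∧ (∃ i : Fin n, m ≤ (i:ℕ) ∧ α i ≠ 0) ∧
        (∀ i : Fin n, m ≤ (i:ℕ) → α i ≠ 0 →
          (∀ j : Fin n, m ≤ (j:ℕ) → j < i → α j = 0) → α i = 1)) ∨
      (PS n α m = 1 ∧
        (∀ i : Fin n, m ≤ (i:ℕ) → α i ≠ 0 →
          (∀ j : Fin n, m ≤ (j:ℕ) → j < i → α j = 0) → α i = -1))) := by
  obtain ⟨h01, hex, hfirst, hlast, halt⟩ := hα
  intro m
  induction m with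
  | zero =>
    intro _
    left
    refine ⟨PS_zero n α, hex.imp (fun i hi => ⟨Nat.zero_le _, hi⟩), ?_⟩
    intro i _ hi hz
    exact hfirst i hi (fun j hj => hz j (Nat.zero_le _) hj)
  | succ m ih =>
    intro hm
    have hmn : m < n := hm
    have IH := ih (Nat.le_of_lt hmn)
    set i₀ : Fin n := ⟨m, hmn⟩ with hi₀
    by_cases hz : α i₀ = 0
    · -- α m = 0, invariant transfers
      have hS : PS n α (m+1) = PS n α m := by rw [PS_succ α hmn, hz, add_zero]
      rcases IH with ⟨h0, ⟨w, hw1, hw2⟩, hnext⟩ | ⟨h1, hnext⟩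
      · left
        refine ⟨by rw [hS, h0], ⟨w, ?_, hw2⟩, ?_⟩
        · have : w ≠ i₀ := fun e => hw2 (e ▸ hz)
          have : (w:ℕ) ≠ m := fun e => this (Fin.ext e)
          omega
        · intro i hi hine hzb
          refine hnext i (by omega) hine ?_
          intro j hj hji
          rcases Nat.eq_or_lt_of_le hj with hj' | hj'
          · have : j = i₀ := Fin.ext hj'.symm
            rw [this]; exact hz
          · exact hzb j hj' hji
      · right
        refine ⟨by rw [hS, h1], ?_⟩
        intro i hi hine hzb
        refine hnext i (by omega) hine ?_
        intro j hj hji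
        rcases Nat.eq_or_lt_of_le hj with hj' | hj'
        · have : j = i₀ := Fin.ext hj'.symm
          rw [this]; exact hz
        · exact hzb j hj' hji
    · rcases IH with ⟨h0, _, hnext⟩ | ⟨h1, hnext⟩
      · -- α m = 1, sum goes to 1
        have h1 : α i₀ = 1 := hnext i₀ (le_refl m) hz (fun j hj hji => by
          exfalso; have := hji; simp [Fin.lt_def, hi₀] at this; omega)
        right
        constructor
        · rw [PS_succ α hmn, h0, h1]; ring
        · intro i hi hine hzb
          have hlt : i₀ < i := by simp [Fin.lt_def, hi₀]; omega
          have := halt i₀ i hlt hz hine (fun k hk1 hk2 =>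
            hzb k (by simp [Fin.lt_def, hi₀] at hk1; omega) hk2)
          rw [this, h1]
      · -- α m = -1, sum goes to 0
        have hneg : α i₀ = -1 := hnext i₀ (le_refl m) hz (fun j hj hji => by
          exfalso; have := hji; simp [Fin.lt_def, hi₀] at this; omega)
        left
        refine ⟨by rw [PS_succ α hmn, h1, hneg]; ring, ?_, ?_⟩
        · by_contra hcon
          push_neg at hcon
          have : α i₀ = 1 := hlast i₀ hz (fun j hj => by
            by_contra hne
            exact hne (hcon j (by simp [Fin.lt_def, hi₀] at hj; omega)))
          omega
        · intro i hi hine hzb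
          have hlt : i₀ < i := by simp [Fin.lt_def, hi₀]; omega
          have := halt i₀ i hlt hz hine (fun k hk1 hk2 =>
            hzb k (by simp [Fin.lt_def, hi₀] at hk1; omega) hk2)
          rw [this, hneg]; ring

lemma PS_mem {n : ℕ} {α : Fin n → ℤ} (hα : IsAlternating n α) {m : ℕ} (hm : m ≤ n) :
    PS n α m = 0 ∨ PS n α m = 1 := by
  rcases key hα m hm with ⟨h, _⟩ | ⟨h, _⟩
  · exact Or.inl h
  · exact Or.inr h

lemma PS_top {n : ℕ} {α : Fin n → ℤ} (hα : IsAlternating n α) : PS n α n = 1 := by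
  rcases key hα n le_rfl with ⟨_, ⟨i, hi, _⟩, _⟩ | ⟨h, _⟩
  · exact absurd hi (by omega)
  · exact h

/-- Given an n × n alternating sign matrix A, the partial row sums
xᵢ = (row 1) + ⋯ + (row i) lie in {0,1}ⁿ, with x₀ = (0,…,0), xₙ = (1,…,1), and
xᵢ covers xᵢ₋₁ in Φₙ for each i; hence they form a maximal chain of Φₙ. -/
theorem asm_to_chain (n : ℕ) (A : Matrix (Fin n) (Fin n) ℤ) (hA : IsASM n A) :
    ∃ x : Fin (n+1) → Vertex n,
      (∀ i : Fin (n+1), ∀ j, (x i).1 j = ∑ k : Fin n, if (k : ℕ) < (i : ℕ) then A k j else 0) ∧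
      (∀ j, (x 0).1 j = 0) ∧ (∀ j, (x (Fin.last n)).1 j = 1) ∧
      (∀ i : Fin n, Covers n (x i.castSucc) (x i.succ)) := by
  refine ⟨fun i => ⟨fun j => PS n (fun k => A k j) (i : ℕ),
    fun j => PS_mem (hA.2 j) (Nat.lt_succ_iff.mp i.isLt)⟩, ?_, ?_, ?_, ?_⟩
  · intro i j; rfl
  · intro j; exact PS_zero n _
  · intro j; exact PS_top (hA.2 j)
  · intro i
    have heq : (fun j => PS n (fun k => A k j) ((i.succ : Fin (n+1)) : ℕ)
        - PS n (fun k => A k j) ((i.castSucc : Fin (n+1)) : ℕ)) = fun j => A i j := by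
      funext j
      have : ((i.succ : Fin (n+1)) : ℕ) = (i : ℕ) + 1 := rfl
      rw [this, Fin.coe_castSucc, PS_succ (fun k => A k j) i.isLt, Fin.eta]
      ring
    show IsAlternating n _
    rw [show (fun j => PS n (fun k => A k j) ((i.succ : Fin (n+1)) : ℕ)
        - PS n (fun k => A k j) ((i.castSucc : Fin (n+1)) : ℕ)) = fun j => A i j from heq]
    exact hA.1 i
end

section
/- The map sending a maximal chain x₀ < x₁ < ⋯ < xₙ of Φₙ to the n × n matrix with i-th row xᵢ − xᵢ₋₁ is a bijection from the set of maximal chains of Φₙ onto the set of n × n alternating sign matrices, with inverse sending an ASM A to the chain of partial row sums x₀, x₁, …, xₙ. -/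
namespace ASMAux

def psum (n : ℕ) (α : Fin n → ℤ) (i : ℕ) : ℤ :=
  ∑ k : Fin n, if (k : ℕ) < i then α k else 0

lemma psum_zero (n : ℕ) (α : Fin n → ℤ) : psum n α 0 = 0 := by simp [psum]

lemma psum_succ (n : ℕ) (α : Fin n → ℤ) {i : ℕ} (h : i < n) :
    psum n α (i + 1) = psum n α i + α ⟨i, h⟩ := by
  unfold psum
  have key : ∀ k : Fin n, (if (k : ℕ) < i + 1 then α k else 0)
      = (if (k : ℕ) < i then α k else 0) + (if k = ⟨i, h⟩ then α k else 0) := by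
    intro k
    rcases lt_trichotomy (k : ℕ) i with h1 | h1 | h1
    · have h2 : k ≠ ⟨i, h⟩ := Fin.ne_of_val_ne (by simp only [Fin.val_mk]; omega)
      simp [h1, Nat.lt_succ_of_lt h1, h2]
    · have h2 : k = ⟨i, h⟩ := Fin.ext h1
      simp [h2, h1]
    · have h2 : k ≠ ⟨i, h⟩ := Fin.ne_of_val_ne (by simp only [Fin.val_mk]; omega)
      have h3 : ¬ (k : ℕ) < i + 1 := by omega
      have h4 : ¬ (k : ℕ) < i := by omega
      simp [h2, h3, h4]
  rw [Finset.sum_congr rfl (fun k _ => key k), Finset.sum_add_distrib]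
  congr 1
  simp

lemma psum_total (n : ℕ) (α : Fin n → ℤ) : psum n α n = ∑ k, α k := by
  unfold psum
  exact Finset.sum_congr rfl (fun k _ => by simp [k.isLt])

lemma psum_const (n : ℕ) (α : Fin n → ℤ) {a b : ℕ} (hab : a ≤ b) (hb : b ≤ n)
    (hz : ∀ m : Fin n, a ≤ (m : ℕ) → (m : ℕ) < b → α m = 0) :
    psum n α b = psum n α a := by
  induction b, hab using Nat.le_induction with
  | base => rfl
  | succ b hab ih =>
    have hb' : b < n := by omega
    rw [psum_succ n α hb', hz ⟨b, hb'⟩ (by simpa using hab) (by simp),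
      ih (by omega) (fun m h1 h2 => hz m h1 (by omega))]
    ring

end ASMAux

namespace ASMAux

lemma alt_psum {n : ℕ} {α : Fin n → ℤ} (hα : IsAlternating n α) :
    (∀ i : ℕ, i ≤ n → psum n α i = 0 ∨ psum n α i = 1) ∧ psum n α n = 1 := by
  obtain ⟨hval, ⟨i0, hi0⟩, hfirst, hlast, halt⟩ := hα
  -- key invariant
  have key : ∀ i : ℕ, i ≤ n →
      (psum n α i = 0 ∧ ∀ k : Fin n, i ≤ (k : ℕ) → α k ≠ 0 →
        (∀ m : Fin n, i ≤ (m : ℕ) → m < k → α m = 0) → α k = 1) ∨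
      (psum n α i = 1 ∧ ∀ k : Fin n, i ≤ (k : ℕ) → α k ≠ 0 →
        (∀ m : Fin n, i ≤ (m : ℕ) → m < k → α m = 0) → α k = -1) := by
    intro i
    induction i with
    | zero =>
      intro _
      left
      refine ⟨psum_zero n α, fun k _ hk hz => hfirst k hk (fun j hj => hz j (by omega) hj)⟩
    | succ i ih =>
      intro hi
      have hi' : i < n := by omega
      set I : Fin n := ⟨i, hi'⟩ with hI
      by_cases hzi : α I = 0
      · rcases ih (by omega) with ⟨hp, hnext⟩ | ⟨hp, hnext⟩
        · left
          refine ⟨by rw [psum_succ n α hi', hzi, hp]; ring, fun k hk hk0 hz => ?_⟩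
          refine hnext k (by omega) hk0 (fun m h1 h2 => ?_)
          rcases Nat.eq_or_lt_of_le h1 with h3 | h3
          · have : m = I := Fin.ext h3.symm
            rw [this]; exact hzi
          · exact hz m h3 h2
        · right
          refine ⟨by rw [psum_succ n α hi', hzi, hp]; ring, fun k hk hk0 hz => ?_⟩
          refine hnext k (by omega) hk0 (fun m h1 h2 => ?_)
          rcases Nat.eq_or_lt_of_le h1 with h3 | h3
          · have : m = I := Fin.ext h3.symm
            rw [this]; exact hzi
          · exact hz m h3 h2
      · rcases ih (by omega) with ⟨hp, hnext⟩ | ⟨hp, hnext⟩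
        · have hI1 : α I = 1 := hnext I (le_refl i) hzi
            (fun m h1 h2 => absurd h2 (by simp only [Fin.lt_def, Fin.val_mk] at h1 h2 ⊢; have : (I : ℕ) = i := rfl; omega))
          right
          refine ⟨by rw [psum_succ n α hi', hI1, hp]; ring, fun k hk hk0 hz => ?_⟩
          have hIk : I < k := by simp only [Fin.lt_def, Fin.val_mk]; have : (I : ℕ) = i := rfl; omega
          have := halt I k hIk hzi hk0
            (fun m h1 h2 => hz m (by simp only [Fin.lt_def, Fin.val_mk] at h1; have : (I : ℕ) = i := rfl; omega) h2)
          rw [this, hI1]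
        · have hI1 : α I = -1 := hnext I (le_refl i) hzi
            (fun m h1 h2 => absurd h2 (by simp only [Fin.lt_def, Fin.val_mk] at h1 h2 ⊢; have : (I : ℕ) = i := rfl; omega))
          left
          refine ⟨by rw [psum_succ n α hi', hI1, hp]; ring, fun k hk hk0 hz => ?_⟩
          have hIk : I < k := by simp only [Fin.lt_def, Fin.val_mk]; have : (I : ℕ) = i := rfl; omega
          have := halt I k hIk hzi hk0
            (fun m h1 h2 => hz m (by simp only [Fin.lt_def, Fin.val_mk] at h1; have : (I : ℕ) = i := rfl; omega) h2)
          rw [this, hI1]; ring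
  constructor
  · intro i hi
    rcases key i hi with ⟨hp, _⟩ | ⟨hp, _⟩
    · exact Or.inl hp
    · exact Or.inr hp
  · -- total sum is 1: use the last nonzero entry
    set s : Finset (Fin n) := Finset.univ.filter (fun k => α k ≠ 0) with hs
    have hsne : s.Nonempty := ⟨i0, by simp [hs, hi0]⟩
    set K := s.max' hsne with hK
    have hKmem : α K ≠ 0 := by
      have := s.max'_mem hsne
      simp [hs] at this
      exact this
    have hKmax : ∀ j : Fin n, α j ≠ 0 → j ≤ K := by
      intro j hj
      exact s.le_max' j (by simp [hs, hj])
    have hK1 : α K = 1 := hlast K hKmem (fun j hj => by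
      by_contra hc
      exact absurd (hKmax j hc) (not_le.mpr hj))
    have hKlt : (K : ℕ) < n := K.isLt
    -- at position K.val, branch must be the "0" branch
    have hpK : psum n α (K : ℕ) = 0 := by
      rcases key (K : ℕ) (le_of_lt hKlt) with ⟨hp, _⟩ | ⟨_, hnext⟩
      · exact hp
      · have := hnext K (le_refl _) hKmem
          (fun m h1 h2 => absurd h2 (by simp only [Fin.lt_def] at h1 h2 ⊢; omega))
        rw [hK1] at this; omega
    have hKK : K = ⟨(K : ℕ), hKlt⟩ := Fin.ext rfl
    have hpK1 : psum n α ((K : ℕ) + 1) = 1 := by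
      rw [psum_succ n α hKlt, hpK, ← hKK, hK1]; ring
    have : psum n α n = psum n α ((K : ℕ) + 1) :=
      psum_const n α (by omega) (le_refl n) (fun m h1 _ => by
        by_contra hc
        have := hKmax m hc
        simp only [Fin.le_def] at this; omega)
    rw [this, hpK1]

end ASMAux


namespace ASMAux

lemma psum_alt {n : ℕ} {α : Fin n → ℤ}
    (h0 : ∀ i : ℕ, i ≤ n → psum n α i = 0 ∨ psum n α i = 1)
    (h1 : psum n α n = 1) : IsAlternating n α := by
  have d : ∀ i : Fin n, α i = psum n α ((i : ℕ) + 1) - psum n α (i : ℕ) := by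
    intro i
    rw [psum_succ n α i.isLt]
    simp
  refine ⟨?_, ?_, ?_, ?_, ?_⟩
  · intro i
    have := d i
    have h2 := h0 (i : ℕ) (le_of_lt i.isLt)
    have h3 := h0 ((i : ℕ) + 1) i.isLt
    omega
  · by_contra hc
    push_neg at hc
    have : psum n α n = psum n α 0 :=
      psum_const n α (Nat.zero_le n) (le_refl n) (fun m _ _ => hc m)
    rw [psum_zero] at this; omega
  · intro i hi hz
    have hpi : psum n α (i : ℕ) = psum n α 0 :=
      psum_const n α (Nat.zero_le _) (le_of_lt i.isLt)
        (fun m _ h2 => hz m (Fin.lt_def.mpr h2))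
    rw [psum_zero] at hpi
    have := d i
    have h3 := h0 ((i : ℕ) + 1) i.isLt
    omega
  · intro i hi hz
    have hpn : psum n α n = psum n α ((i : ℕ) + 1) :=
      psum_const n α i.isLt (le_refl n)
        (fun m h2 _ => hz m (by simp only [Fin.lt_def]; omega))
    have := d i
    have h3 := h0 (i : ℕ) (le_of_lt i.isLt)
    omega
  · intro i j hij hi hj hz
    have hij' : (i : ℕ) < (j : ℕ) := hij
    have hpj : psum n α (j : ℕ) = psum n α ((i : ℕ) + 1) :=
      psum_const n α (by omega) (le_of_lt j.isLt)
        (fun m h2 h3 => hz m (by simp only [Fin.lt_def]; omega) (Fin.lt_def.mpr h3))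
    have di := d i
    have dj := d j
    have h2 := h0 (i : ℕ) (le_of_lt i.isLt)
    have h3 := h0 ((i : ℕ) + 1) i.isLt
    have h4 := h0 ((j : ℕ) + 1) j.isLt
    omega

end ASMAux

/-- A maximal chain in Φₙ: each element covers the previous, the first element is
minimal and the last is maximal (in the order generated by the covering relation). -/
def MaxChain (n : ℕ) :=
  {x : Fin (n+1) → Vertex n //
    (∀ i : Fin n, Covers n (x i.castSucc) (x i.succ)) ∧
    (∀ y : Vertex n, ¬ Relation.TransGen (Covers n) y (x 0)) ∧
    (∀ y : Vertex n, ¬ Relation.TransGen (Covers n) (x (Fin.last n)) y)}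

namespace ASMAux

def vsum {n : ℕ} (x : Vertex n) : ℤ := ∑ j, x.1 j

lemma alt_sum_one {n : ℕ} {α : Fin n → ℤ} (h : IsAlternating n α) : ∑ k, α k = 1 := by
  rw [← psum_total]; exact (alt_psum h).2

lemma covers_vsum {n : ℕ} {x y : Vertex n} (h : Covers n x y) : vsum y = vsum x + 1 := by
  have := alt_sum_one h
  rw [Finset.sum_sub_distrib] at this
  unfold vsum
  omega

lemma transgen_vsum {n : ℕ} {x y : Vertex n} (h : Relation.TransGen (Covers n) x y) :
    vsum x < vsum y := by
  induction h with
  | single h => rw [covers_vsum h]; omega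
  | tail _ h ih => rw [covers_vsum h]; omega

lemma vsum_nonneg {n : ℕ} (x : Vertex n) : 0 ≤ vsum x :=
  Finset.sum_nonneg (fun j _ => by rcases x.2 j with h | h <;> omega)

lemma vsum_le {n : ℕ} (x : Vertex n) : vsum x ≤ n := by
  calc vsum x ≤ ∑ _j : Fin n, (1 : ℤ) :=
        Finset.sum_le_sum (fun j _ => by rcases x.2 j with h | h <;> omega)
    _ = n := by simp

lemma alt_single {n : ℕ} (j : Fin n) :
    IsAlternating n (fun i => if i = j then 1 else 0) := by
  refine ⟨fun i => by by_cases h : i = j <;> simp [h], ⟨j, by simp⟩, ?_, ?_, ?_⟩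
  · intro i hi _
    simp only [ne_eq, ite_eq_right_iff, not_forall] at hi
    simp [hi.1]
  · intro i hi _
    simp only [ne_eq, ite_eq_right_iff, not_forall] at hi
    simp [hi.1]
  · intro i k hik hi hk _
    simp only [ne_eq, ite_eq_right_iff, not_forall] at hi hk
    rw [hi.1, hk.1] at hik
    exact absurd hik (lt_irrefl j)

/-- In a maximal chain, the bottom is the all-zeros vector. -/
lemma chain_first_zero {n : ℕ} (c : MaxChain n) (j : Fin n) : (c.1 0).1 j = 0 := by
  rcases (c.1 0).2 j with h | h
  · exact h
  · exfalso
    set x0 := c.1 0 with hx0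
    set y : Vertex n := ⟨Function.update x0.1 j 0, fun i => by
      rcases eq_or_ne i j with rfl | hij
      · simp
      · simp only [Function.update_of_ne hij]; exact x0.2 i⟩ with hy
    refine c.2.2.1 y (Relation.TransGen.single ?_)
    have : (fun i => x0.1 i - y.1 i) = (fun i => if i = j then 1 else 0) := by
      funext i
      rcases eq_or_ne i j with rfl | hij
      · simp [hy, h]
      · simp [hy, Function.update_of_ne hij, hij]
    unfold Covers
    rw [this]
    exact alt_single j

/-- In a maximal chain, the top is the all-ones vector. -/
lemma chain_last_one {n : ℕ} (c : MaxChain n) (j : Fin n) : (c.1 (Fin.last n)).1 j = 1 := by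
  rcases (c.1 (Fin.last n)).2 j with h | h
  · exfalso
    set x0 := c.1 (Fin.last n) with hx0
    set y : Vertex n := ⟨Function.update x0.1 j 1, fun i => by
      rcases eq_or_ne i j with rfl | hij
      · simp
      · simp only [Function.update_of_ne hij]; exact x0.2 i⟩ with hy
    refine c.2.2.2 y (Relation.TransGen.single ?_)
    have : (fun i => y.1 i - x0.1 i) = (fun i => if i = j then 1 else 0) := by
      funext i
      rcases eq_or_ne i j with rfl | hij
      · simp [hy, h]
      · simp [hy, Function.update_of_ne hij, hij]
    unfold Covers
    rw [this]
    exact alt_single j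
  · exact h

end ASMAux

namespace ASMAux

def toMat {n : ℕ} (c : MaxChain n) : Matrix (Fin n) (Fin n) ℤ :=
  fun i j => (c.1 i.succ).1 j - (c.1 i.castSucc).1 j

lemma chain_psum {n : ℕ} (c : MaxChain n) (j : Fin n) :
    ∀ i : ℕ, (hi : i ≤ n) → psum n (fun k => toMat c k j) i = (c.1 ⟨i, by omega⟩).1 j := by
  intro i
  induction i with
  | zero =>
    intro hi
    rw [psum_zero]
    exact (chain_first_zero c j).symm
  | succ i ih =>
    intro hi
    have hi' : i < n := by omega
    rw [psum_succ _ _ hi', ih (by omega)]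
    show _ + ((c.1 (⟨i, hi'⟩ : Fin n).succ).1 j - (c.1 (⟨i, hi'⟩ : Fin n).castSucc).1 j) = _
    have h1 : (⟨i, hi'⟩ : Fin n).succ = (⟨i + 1, by omega⟩ : Fin (n+1)) := rfl
    have h2 : (⟨i, hi'⟩ : Fin n).castSucc = (⟨i, by omega⟩ : Fin (n+1)) := rfl
    rw [h1, h2]
    ring

lemma toMat_isASM {n : ℕ} (c : MaxChain n) : IsASM n (toMat c) := by
  constructor
  · intro i
    exact c.2.1 i
  · intro j
    apply psum_alt
    · intro i hi
      rw [chain_psum c j i hi]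
      exact (c.1 ⟨i, by omega⟩).2 j
    · rw [chain_psum c j n (le_refl n)]
      have : (⟨n, by omega⟩ : Fin (n+1)) = Fin.last n := rfl
      rw [this]
      exact chain_last_one c j

def toCh {n : ℕ} (A : {A : Matrix (Fin n) (Fin n) ℤ // IsASM n A}) : Fin (n+1) → Vertex n :=
  fun i => ⟨fun j => psum n (fun k => A.1 k j) (i : ℕ),
    fun j => (alt_psum (A.2.2 j)).1 (i : ℕ) (by omega)⟩

lemma toCh_covers {n : ℕ} (A : {A : Matrix (Fin n) (Fin n) ℤ // IsASM n A}) (i : Fin n) :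
    Covers n (toCh A i.castSucc) (toCh A i.succ) := by
  unfold Covers
  have : (fun j => (toCh A i.succ).1 j - (toCh A i.castSucc).1 j) = (fun j => A.1 i j) := by
    funext j
    show psum n (fun k => A.1 k j) ((i : ℕ) + 1) - psum n (fun k => A.1 k j) (i : ℕ) = _
    rw [psum_succ _ _ i.isLt]
    simp
  rw [this]
  exact A.2.1 i

lemma toCh_vsum_zero {n : ℕ} (A : {A : Matrix (Fin n) (Fin n) ℤ // IsASM n A}) :
    vsum (toCh A 0) = 0 := by
  unfold vsum
  apply Finset.sum_eq_zero
  intro j _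
  show psum n (fun k => A.1 k j) 0 = 0
  exact psum_zero _ _

lemma toCh_vsum_last {n : ℕ} (A : {A : Matrix (Fin n) (Fin n) ℤ // IsASM n A}) :
    vsum (toCh A (Fin.last n)) = n := by
  unfold vsum
  have : ∀ j : Fin n, (toCh A (Fin.last n)).1 j = 1 := by
    intro j
    show psum n (fun k => A.1 k j) n = 1
    exact (alt_psum (A.2.2 j)).2
  rw [Finset.sum_congr rfl (fun j _ => this j)]
  simp

def theEquiv (n : ℕ) : MaxChain n ≃ {A : Matrix (Fin n) (Fin n) ℤ // IsASM n A} where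
  toFun c := ⟨toMat c, toMat_isASM c⟩
  invFun A := ⟨toCh A, toCh_covers A, fun y hy => by
      have := transgen_vsum hy
      rw [toCh_vsum_zero A] at this
      exact absurd (vsum_nonneg y) (by omega),
    fun y hy => by
      have := transgen_vsum hy
      rw [toCh_vsum_last A] at this
      exact absurd (vsum_le y) (by omega)⟩
  left_inv c := by
    apply Subtype.ext
    funext i
    apply Subtype.ext
    funext j
    show psum n (fun k => toMat c k j) (i : ℕ) = (c.1 i).1 j
    rw [chain_psum c j (i : ℕ) (by omega)]
  right_inv A := by
    apply Subtype.ext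
    funext i j
    show psum n (fun k => A.1 k j) ((i.succ : Fin (n+1)) : ℕ)
        - psum n (fun k => A.1 k j) ((i.castSucc : Fin (n+1)) : ℕ) = A.1 i j
    have h1 : ((i.succ : Fin (n+1)) : ℕ) = (i : ℕ) + 1 := rfl
    have h2 : ((i.castSucc : Fin (n+1)) : ℕ) = (i : ℕ) := rfl
    rw [h1, h2, psum_succ _ _ i.isLt]
    simp

end ASMAux

/-- The map sending a maximal chain x₀ < ⋯ < xₙ of Φₙ to the matrix with i-th row
xᵢ - xᵢ₋₁ is a bijection onto the n × n alternating sign matrices, with inverse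
sending an ASM to its chain of partial row sums. -/
theorem chains_equiv_asms (n : ℕ) :
    ∃ e : MaxChain n ≃ {A : Matrix (Fin n) (Fin n) ℤ // IsASM n A},
      (∀ c : MaxChain n,
        (e c).1 = fun i j => (c.1 i.succ).1 j - (c.1 i.castSucc).1 j) ∧
      (∀ A : {A : Matrix (Fin n) (Fin n) ℤ // IsASM n A}, ∀ i : Fin (n+1), ∀ j,
        ((e.symm A).1 i).1 j = ∑ k : Fin n, if (k : ℕ) < (i : ℕ) then A.1 k j else 0) := by
  refine ⟨ASMAux.theEquiv n, fun c => rfl, fun A i j => rfl⟩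
end
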